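/- Suppose the operators A_n = 𝒜(x,n) and B_n = 𝒜(y,n) satisfy ‖A_n − B_n‖ ≤ aⁿ d(x,y)^ν for all n ≥ 0, and on a regular set Λ_ℓ the cocycle satisfies, for closed subspaces E⁻(x) ⊕ E⁺(x) = B: ‖𝒜(x,n)u‖ ≤ ℓe^{(λ₂+ε)n}‖u‖ for u ∈ E⁻(x), ‖𝒜(x,n)v‖ ≥ ℓ⁻¹e^{(λ₁−ε)n}‖v‖ for v ∈ E⁺(x), and max{‖u‖,‖v‖} ≤ ℓ‖u+v‖, where λ₂ + ε < λ₁ − ε and a > e^{λ₁−ε}. Then for all x, y ∈ Λ_ℓ with d(x,y) < 1: d̂(E⁻(x), E⁻(y)) ≤ (4+2ℓ)ℓ² e^{λ₁−λ₂−2ε} d(x,y)^{ν(λ₁−λ₂−2ε)/(log a − λ₂ − ε)}. -/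

import Mathlib

/-!
Write a unit vector `w ∈ E⁻(x)` as `w = u + v` with `u ∈ E⁻(y)`, `v ∈ E⁺(y)`. Along the orbit of `y`
the component `v` grows like `e^{(λ₁-ε)n}`, while `𝒜(y,n)w` stays within `aⁿ d(x,y)^ν` of `𝒜(x,n)w`,
which decays like `e^{(λ₂+ε)n}`; hence
`‖v‖ ≲ e^{-(λ₁-λ₂-2ε)n} + e^{(log a - λ₁ + ε)n} d(x,y)^ν` for every `n`. Taking
`n = ⌊ν log(1/d(x,y)) / (log a - λ₂ - ε)⌋` balances the two terms and gives
`‖v‖ ≲ d(x,y)^{ν(λ₁-λ₂-2ε)/(log a-λ₂-ε)}`, and `w` lies within `2‖v‖` of the unit sphere of `E⁻(y)`.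
-/

open Metric Real

variable {B : Type*} [NormedAddCommGroup B] [NormedSpace ℝ B]

def unitSph (E : Submodule ℝ B) : Set B := {v : B | v ∈ E ∧ ‖v‖ = 1}

/-- `dist(E,F) = sup_{v ∈ S_E} dist(v, S_F)`. -/
noncomputable def distSphOne (E F : Submodule ℝ B) : ℝ :=
  sSup {r : ℝ | ∃ v ∈ unitSph E, r = infDist v (unitSph F)}

/-- The Hausdorff distance between unit spheres `d̂(E,F)`. -/
noncomputable def distSphHat (E F : Submodule ℝ B) : ℝ :=
  max (distSphOne E F) (distSphOne F E)

theorem distSphOne_le_of_forall {E F : Submodule ℝ B} {C : ℝ} (hC : 0 ≤ C)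
    (h : ∀ w ∈ unitSph E, infDist w (unitSph F) ≤ C) : distSphOne E F ≤ C :=
  Real.sSup_le (by rintro r ⟨w, hw, rfl⟩; exact h w hw) hC

theorem norm_sub_inv_norm_smul_self {u : B} (hu : u ≠ 0) : ‖u - ‖u‖⁻¹ • u‖ = |‖u‖ - 1| := by
  have hpos : 0 < ‖u‖ := norm_pos_iff.2 hu
  have hfactor : u - ‖u‖⁻¹ • u = (1 - ‖u‖⁻¹) • u := by rw [sub_smul, one_smul]
  have hscale : (1 - ‖u‖⁻¹) * ‖u‖ = ‖u‖ - 1 := by field_simp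
  rw [hfactor, norm_smul, Real.norm_eq_abs, ← hscale, abs_mul, abs_of_pos hpos]

theorem infDist_unitSph_le_two_mul_norm_sub {E : Submodule ℝ B} {w u : B} (hw : ‖w‖ = 1)
    (hu : u ∈ E) : infDist w (unitSph E) ≤ 2 * ‖w - u‖ := by
  rcases eq_or_ne u 0 with rfl | hu0
  · rw [sub_zero, hw, mul_one]
    rcases (unitSph E).eq_empty_or_nonempty with he | ⟨s, hs⟩
    · rw [he, infDist_empty]
      norm_num
    calc infDist w (unitSph E) ≤ dist w s := infDist_le_dist_of_mem hs
      _ ≤ ‖w‖ + ‖s‖ := by rw [dist_eq_norm]; exact norm_sub_le w s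
      _ = 2 := by rw [hw, hs.2]; norm_num
  have hpos : 0 < ‖u‖ := norm_pos_iff.2 hu0
  have hs : ‖u‖⁻¹ • u ∈ unitSph E :=
    ⟨E.smul_mem _ hu, by rw [norm_smul, norm_inv, norm_norm, inv_mul_cancel₀ hpos.ne']⟩
  have hrescale : ‖u - ‖u‖⁻¹ • u‖ ≤ ‖w - u‖ := by
    rw [norm_sub_inv_norm_smul_self hu0, ← hw, norm_sub_rev w u]
    exact abs_norm_sub_norm_le u w
  calc infDist w (unitSph E) ≤ dist w (‖u‖⁻¹ • u) := infDist_le_dist_of_mem hs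
    _ ≤ ‖w - u‖ + ‖u - ‖u‖⁻¹ • u‖ := by
        rw [dist_eq_norm]; exact norm_sub_le_norm_sub_add_norm_sub _ _ _
    _ ≤ 2 * ‖w - u‖ := by linarith

theorem norm_apply_le_of_add_eq (S T : B →L[ℝ] B) {u v w : B} (h : u + v = w) :
    ‖S v‖ ≤ ‖T w‖ + ‖S - T‖ * ‖w‖ + ‖S u‖ := by
  have hSv : S v = T w + (S - T) w - S u := by
    rw [← h, sub_apply, map_add, map_add]
    abel
  calc ‖S v‖ ≤ ‖T w + (S - T) w‖ + ‖S u‖ := hSv ▸ norm_sub_le _ _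
    _ ≤ ‖T w‖ + ‖(S - T) w‖ + ‖S u‖ := by gcongr; exact norm_add_le _ _
    _ ≤ ‖T w‖ + ‖S - T‖ * ‖w‖ + ‖S u‖ := by gcongr; exact (S - T).le_opNorm w

theorem exists_nat_exp_bounds_by_rpow {α β ν d : ℝ} (hα : 0 < α) (hβ : 0 ≤ β) (hν : 0 ≤ ν)
    (hd0 : 0 < d) (hd1 : d ≤ 1) :
    ∃ n : ℕ, exp (-α * n) ≤ exp α * d ^ (ν * α / (α + β)) ∧
      exp (β * n) * d ^ ν ≤ d ^ (ν * α / (α + β)) := by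
  set t := ν * -log d / (α + β)
  have hαβ : 0 < α + β := by linarith
  have ht : 0 ≤ t := div_nonneg (mul_nonneg hν (neg_nonneg.2 (log_nonpos hd0.le hd1))) hαβ.le
  have hlog : ν * α / (α + β) * log d = -α * t := by
    simp only [t]
    field_simp
  have hνlog : ν * log d = -(α + β) * t := by
    simp only [t]
    field_simp
  refine ⟨⌊t⌋₊, ?_, ?_⟩
  · rw [rpow_def_of_pos hd0, mul_comm (log d), hlog, ← exp_add, exp_le_exp]
    nlinarith [Nat.lt_floor_add_one t]
  · rw [rpow_def_of_pos hd0, rpow_def_of_pos hd0, mul_comm (log d), mul_comm (log d), hlog,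
      hνlog, ← exp_add, exp_le_exp]
    nlinarith [Nat.floor_le ht]

theorem le_rpow_of_forall_exp_mul_le {r ℓ lam₁ lam₂ ε a ν d : ℝ} (hℓ : 0 ≤ ℓ) (hν : 0 ≤ ν)
    (hgap : lam₂ + ε < lam₁ - ε) (ha : exp (lam₁ - ε) < a) (hd0 : 0 < d) (hd1 : d ≤ 1)
    (h : ∀ n : ℕ,
      exp ((lam₁ - ε) * n) * r ≤ ℓ * ((ℓ + ℓ ^ 2) * exp ((lam₂ + ε) * n) + a ^ n * d ^ ν)) :
    r ≤ (ℓ + ℓ ^ 2 + ℓ ^ 3) * exp (lam₁ - lam₂ - 2 * ε) *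
      d ^ (ν * (lam₁ - lam₂ - 2 * ε) / (log a - lam₂ - ε)) := by
  have ha0 : 0 < a := (exp_pos _).trans ha
  have hβ : 0 ≤ log a - lam₁ + ε := by linarith [(lt_log_iff_exp_lt ha0).2 ha]
  obtain ⟨n, hdecay, hgrowth⟩ := 
    exists_nat_exp_bounds_by_rpow (α := lam₁ - lam₂ - 2 * ε) (by linarith) hβ hν hd0 hd1
  rw [show lam₁ - lam₂ - 2 * ε + (log a - lam₁ + ε) = log a - lam₂ - ε by ring] at hdecay hgrowth
  set θ := ν * (lam₁ - lam₂ - 2 * ε) / (log a - lam₂ - ε)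
  have hr : r ≤ (ℓ ^ 2 + ℓ ^ 3) * exp (-(lam₁ - lam₂ - 2 * ε) * n) +
      ℓ * (exp ((log a - lam₁ + ε) * n) * d ^ ν) := by
    have hsplit₁ : exp (-(lam₁ - lam₂ - 2 * ε) * n) * exp ((lam₁ - ε) * n) =
        exp ((lam₂ + ε) * n) := by rw [← exp_add]; ring_nf
    have hsplit₂ : exp ((log a - lam₁ + ε) * n) * exp ((lam₁ - ε) * n) = a ^ n := by
      rw [← exp_add, ← rpow_natCast, rpow_def_of_pos ha0]; ring_nf
    refine le_of_mul_le_mul_left ?_ (exp_pos ((lam₁ - ε) * n))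
    linear_combination h n - (ℓ ^ 2 + ℓ ^ 3) * hsplit₁ - ℓ * d ^ ν * hsplit₂
  have hexp : 1 ≤ exp (lam₁ - lam₂ - 2 * ε) := one_le_exp (by linarith)
  have hdθ : 0 ≤ d ^ θ := rpow_nonneg hd0.le θ
  calc r ≤ (ℓ ^ 2 + ℓ ^ 3) * (exp (lam₁ - lam₂ - 2 * ε) * d ^ θ) + ℓ * d ^ θ :=
        hr.trans (by gcongr)
    _ ≤ (ℓ + ℓ ^ 2 + ℓ ^ 3) * exp (lam₁ - lam₂ - 2 * ε) * d ^ θ := by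
        nlinarith [mul_le_mul_of_nonneg_right hexp (mul_nonneg hℓ hdθ)]

section Cocycle

variable {X : Type*} [MetricSpace X] {Λℓ : Set X} {Eminus Eplus : X → Submodule ℝ B}
  {𝒜 : X → ℕ → (B →L[ℝ] B)} {lam₁ lam₂ ε ℓ a ν : ℝ}

theorem exp_mul_norm_fast_component_le (hℓ : 0 < ℓ)
    (hAB : ∀ x y : X, ∀ n : ℕ, ‖𝒜 x n - 𝒜 y n‖ ≤ a ^ n * dist x y ^ ν)
    (hminus : ∀ x ∈ Λℓ, ∀ u ∈ Eminus x, ∀ n : ℕ,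
      ‖𝒜 x n u‖ ≤ ℓ * exp ((lam₂ + ε) * n) * ‖u‖)
    (hplus : ∀ x ∈ Λℓ, ∀ v ∈ Eplus x, ∀ n : ℕ,
      ℓ⁻¹ * exp ((lam₁ - ε) * n) * ‖v‖ ≤ ‖𝒜 x n v‖)
    (hdom : ∀ x ∈ Λℓ, ∀ u ∈ Eminus x, ∀ v ∈ Eplus x, max ‖u‖ ‖v‖ ≤ ℓ * ‖u + v‖)
    {x y : X} (hx : x ∈ Λℓ) (hy : y ∈ Λℓ) {w u v : B} (hw : w ∈ unitSph (Eminus x))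
    (hu : u ∈ Eminus y) (hv : v ∈ Eplus y) (huv : u + v = w) (n : ℕ) :
    exp ((lam₁ - ε) * n) * ‖v‖ ≤
      ℓ * ((ℓ + ℓ ^ 2) * exp ((lam₂ + ε) * n) + a ^ n * dist x y ^ ν) := by
  have hu_le : ‖u‖ ≤ ℓ := by
    simpa [huv, hw.2] using (le_max_left _ _).trans (hdom y hy u hu v hv)
  have hTw : ‖𝒜 x n w‖ ≤ ℓ * exp ((lam₂ + ε) * n) := by
    simpa [hw.2] using hminus x hx w hw.1 n
  have hST : ‖𝒜 y n - 𝒜 x n‖ ≤ a ^ n * dist x y ^ ν := dist_comm x y ▸ hAB y x n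
  have hSu : ‖𝒜 y n u‖ ≤ ℓ * exp ((lam₂ + ε) * n) * ℓ :=
    (hminus y hy u hu n).trans (by gcongr)
  have hSv := norm_apply_le_of_add_eq (𝒜 y n) (𝒜 x n) huv
  rw [hw.2, mul_one] at hSv
  calc exp ((lam₁ - ε) * n) * ‖v‖ = ℓ * (ℓ⁻¹ * exp ((lam₁ - ε) * n) * ‖v‖) := by
        field_simp
    _ ≤ ℓ * ‖𝒜 y n v‖ := by gcongr; exact hplus y hy v hv n
    _ ≤ ℓ * ((ℓ + ℓ ^ 2) * exp ((lam₂ + ε) * n) + a ^ n * dist x y ^ ν) := by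
        gcongr
        linarith

theorem distSphOne_slowSpace_le
    (hcompl : ∀ x ∈ Λℓ, IsCompl (Eminus x) (Eplus x))
    (hℓ : 1 ≤ ℓ) (hν : 0 < ν) (hgap : lam₂ + ε < lam₁ - ε) (ha : exp (lam₁ - ε) < a)
    (hAB : ∀ x y : X, ∀ n : ℕ, ‖𝒜 x n - 𝒜 y n‖ ≤ a ^ n * dist x y ^ ν)
    (hminus : ∀ x ∈ Λℓ, ∀ u ∈ Eminus x, ∀ n : ℕ,
      ‖𝒜 x n u‖ ≤ ℓ * exp ((lam₂ + ε) * n) * ‖u‖)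
    (hplus : ∀ x ∈ Λℓ, ∀ v ∈ Eplus x, ∀ n : ℕ,
      ℓ⁻¹ * exp ((lam₁ - ε) * n) * ‖v‖ ≤ ‖𝒜 x n v‖)
    (hdom : ∀ x ∈ Λℓ, ∀ u ∈ Eminus x, ∀ v ∈ Eplus x, max ‖u‖ ‖v‖ ≤ ℓ * ‖u + v‖)
    {x y : X} (hx : x ∈ Λℓ) (hy : y ∈ Λℓ) (hxy : dist x y < 1) :
    distSphOne (Eminus x) (Eminus y) ≤
      (4 + 2 * ℓ) * ℓ ^ 2 * exp (lam₁ - lam₂ - 2 * ε) *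
        dist x y ^ (ν * (lam₁ - lam₂ - 2 * ε) / (log a - lam₂ - ε)) := by
  have hℓ0 : 0 < ℓ := one_pos.trans_le hℓ
  apply distSphOne_le_of_forall (by positivity)
  intro w hw
  rcases (dist_nonneg (x := x) (y := y)).eq_or_lt with h0 | hd0
  · rw [eq_of_dist_eq_zero h0.symm] at hw
    rw [infDist_zero_of_mem hw]
    positivity
  obtain ⟨u, v, huv, -⟩ := Submodule.existsUnique_add_of_isCompl (hcompl y hy) w
  have hv := le_rpow_of_forall_exp_mul_le hℓ0.le hν.le hgap ha hd0 hxy.le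
    (exp_mul_norm_fast_component_le hℓ0 hAB hminus hplus hdom hx hy hw u.2 v.2 huv)
  have hconst : 2 * (ℓ + ℓ ^ 2 + ℓ ^ 3) ≤ (4 + 2 * ℓ) * ℓ ^ 2 := by nlinarith
  calc infDist w (unitSph (Eminus y)) ≤ 2 * ‖w - u‖ :=
        infDist_unitSph_le_two_mul_norm_sub hw.2 u.2
    _ = 2 * ‖(v : B)‖ := by rw [← huv, add_sub_cancel_left]
    _ ≤ 2 * ((ℓ + ℓ ^ 2 + ℓ ^ 3) * exp (lam₁ - lam₂ - 2 * ε) *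
          dist x y ^ (ν * (lam₁ - lam₂ - 2 * ε) / (log a - lam₂ - ε))) := by gcongr
    _ ≤ _ := by
        rw [← mul_assoc, ← mul_assoc]
        gcongr

end Cocycle

theorem holder_slow_space_general
    {X : Type*} [MetricSpace X]
    (Λℓ : Set X) (Eminus Eplus : X → Submodule ℝ B)
    (hcompl : ∀ x ∈ Λℓ, IsCompl (Eminus x) (Eplus x))
    (𝒜 : X → ℕ → (B →L[ℝ] B))
    (lam₁ lam₂ ε ℓ a ν : ℝ)
    (hℓ : 1 ≤ ℓ) (hν : 0 < ν)
    (hgap : lam₂ + ε < lam₁ - ε) (ha : exp (lam₁ - ε) < a)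
    (hAB : ∀ x y : X, ∀ n : ℕ, ‖𝒜 x n - 𝒜 y n‖ ≤ a ^ n * dist x y ^ ν)
    (hminus : ∀ x ∈ Λℓ, ∀ u ∈ Eminus x, ∀ n : ℕ,
      ‖𝒜 x n u‖ ≤ ℓ * exp ((lam₂ + ε) * n) * ‖u‖)
    (hplus : ∀ x ∈ Λℓ, ∀ v ∈ Eplus x, ∀ n : ℕ,
      ℓ⁻¹ * exp ((lam₁ - ε) * n) * ‖v‖ ≤ ‖𝒜 x n v‖)
    (hdom : ∀ x ∈ Λℓ, ∀ u ∈ Eminus x, ∀ v ∈ Eplus x, max ‖u‖ ‖v‖ ≤ ℓ * ‖u + v‖) :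
    ∀ x ∈ Λℓ, ∀ y ∈ Λℓ, dist x y < 1 →
      distSphHat (Eminus x) (Eminus y) ≤
        (4 + 2 * ℓ) * ℓ ^ 2 * exp (lam₁ - lam₂ - 2 * ε) *
          dist x y ^ (ν * (lam₁ - lam₂ - 2 * ε) / (Real.log a - lam₂ - ε)) := by
  intro x hx y hy hxy
  refine max_le (distSphOne_slowSpace_le hcompl hℓ hν hgap ha hAB hminus hplus hdom hx hy hxy) ?_
  rw [dist_comm x y]
  exact distSphOne_slowSpace_le hcompl hℓ hν hgap ha hAB hminus hplus hdom hy hx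
    (by rwa [dist_comm])

/-- Hölder continuity of the slow Oseledets subspace `E⁻` over a regular set: if the
cocycle is Hölder (`‖𝒜(x,n) − 𝒜(y,n)‖ ≤ aⁿ d(x,y)^ν`) and admits a uniformly dominated
splitting `B = E⁻(x) ⊕ E⁺(x)` on `Λ_ℓ`, then for `x, y ∈ Λ_ℓ` with `d(x,y) < 1`,
`d̂(E⁻(x),E⁻(y)) ≤ (4+2ℓ)ℓ² e^{lam₁−lam₂−2ε} d(x,y)^{ν(lam₁−lam₂−2ε)/(log a − lam₂ − ε)}`. -/
theorem holder_slow_space [CompleteSpace B]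
    {X : Type*} [MetricSpace X]
    (Λℓ : Set X) (Eminus Eplus : X → Submodule ℝ B)
    (hclosed : ∀ x ∈ Λℓ, IsClosed ((Eminus x : Set B)) ∧ IsClosed ((Eplus x : Set B)))
    (hcompl : ∀ x ∈ Λℓ, IsCompl (Eminus x) (Eplus x))
    (𝒜 : X → ℕ → (B →L[ℝ] B))
    (lam₁ lam₂ ε ℓ a ν : ℝ)
    (hε : 0 < ε) (hℓ : 1 ≤ ℓ) (hν : 0 < ν) (hν1 : ν ≤ 1)
    (hgap : lam₂ + ε < lam₁ - ε) (ha : exp (lam₁ - ε) < a)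
    (hAB : ∀ x y : X, ∀ n : ℕ, ‖𝒜 x n - 𝒜 y n‖ ≤ a ^ n * dist x y ^ ν)
    (hminus : ∀ x ∈ Λℓ, ∀ u ∈ Eminus x, ∀ n : ℕ,
      ‖𝒜 x n u‖ ≤ ℓ * exp ((lam₂ + ε) * n) * ‖u‖)
    (hplus : ∀ x ∈ Λℓ, ∀ v ∈ Eplus x, ∀ n : ℕ,
      ℓ⁻¹ * exp ((lam₁ - ε) * n) * ‖v‖ ≤ ‖𝒜 x n v‖)
    (hdom : ∀ x ∈ Λℓ, ∀ u ∈ Eminus x, ∀ v ∈ Eplus x, max ‖u‖ ‖v‖ ≤ ℓ * ‖u + v‖) :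
    ∀ x ∈ Λℓ, ∀ y ∈ Λℓ, dist x y < 1 →
      distSphHat (Eminus x) (Eminus y) ≤
        (4 + 2 * ℓ) * ℓ ^ 2 * exp (lam₁ - lam₂ - 2 * ε) *
          dist x y ^ (ν * (lam₁ - lam₂ - 2 * ε) / (Real.log a - lam₂ - ε)) :=
  holder_slow_space_general Λℓ Eminus Eplus hcompl 𝒜 lam₁ lam₂ ε ℓ a ν hℓ hν hgap ha hAB hminus
    hplus hdom
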